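/- The affine curves C₊ = {g₊ = 0} and C₋ = {g₋ = 0} intersect in exactly 32 points: the set {(x,y) ∈ ℂ² : g₊(x,y) = 0 and g₋(x,y) = 0} is finite of cardinality 32. -/

import Mathlib

/- The affine curves `C₊ = {g₊ = 0}` and `C₋ = {g₋ = 0}` intersect in exactly 32
points. -/

/-- `g₊(x,y) := (2y⁴ + y² + 2)x⁴ − (y⁴ − 24y² + 1)x² + 2y⁴ + y² + 2`. -/
def gPlus (x y : ℂ) : ℂ :=
  (2 * y ^ 4 + y ^ 2 + 2) * x ^ 4 - (y ^ 4 - 24 * y ^ 2 + 1) * x ^ 2 +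
    2 * y ^ 4 + y ^ 2 + 2

/-- `g₋(x,y) := (2y⁴ − y² + 2)x⁴ + (y⁴ + 24y² + 1)x² + 2y⁴ − y² + 2`. -/
def gMinus (x y : ℂ) : ℂ :=
  (2 * y ^ 4 - y ^ 2 + 2) * x ^ 4 + (y ^ 4 + 24 * y ^ 2 + 1) * x ^ 2 +
    2 * y ^ 4 - y ^ 2 + 2

/-!
Eliminating `x⁴` gives `(2y⁴+y²+2) g₋ - (2y⁴-y²+2) g₊ = 4x²(y⁸+14y⁴+1)`, and no common point
has `x = 0`, so `y` is one of the eight roots of the separable eliminant `y⁸+14y⁴+1`.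
For such `y`, `y² g₊ ≡ (2y⁴+y²+2)(x²-y²)(x²y²-1)` modulo the eliminant, with nonvanishing first
factor, so `x ∈ {±y, ±y⁻¹}`; these are four distinct values since `y⁴ ≠ 1`. Hence `8 · 4 = 32`.
-/

open Polynomial

namespace Finset

variable {α β : Type*} [DecidableEq α] [DecidableEq β]

theorem card_biUnion_product_singleton (T : Finset β) (S : β → Finset α) :
    (T.biUnion fun y => S y ×ˢ {y}).card = ∑ y ∈ T, (S y).card := by
  rw [card_biUnion]
  · simp only [card_product, card_singleton, mul_one]
  · intro y₁ _ y₂ _ hne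
    simp only [Function.onFun, disjoint_left, mem_product, mem_singleton]
    rintro _ ⟨-, rfl⟩ ⟨-, rfl⟩
    exact hne rfl

theorem mem_biUnion_product_singleton {T : Finset β} {S : β → Finset α} {x : α} {y : β} :
    (x, y) ∈ T.biUnion (fun y => S y ×ˢ {y}) ↔ y ∈ T ∧ x ∈ S y := by
  simp [and_comm]

end Finset

section NegInvOrbit

variable {K : Type*} [Field K] [DecidableEq K]

def negInvOrbit (y : K) : Finset K := {y, -y, y⁻¹, -y⁻¹}

theorem sq_sub_sq_mul_sq_mul_sq_sub_one_eq_zero_iff {x y : K} (hy : y ≠ 0) :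
    (x ^ 2 - y ^ 2) * (x ^ 2 * y ^ 2 - 1) = 0 ↔ x ∈ negInvOrbit y := by
  have hinv : ∀ c : K, x * y = c ↔ x = c * y⁻¹ := fun c => (eq_mul_inv_iff_mul_eq₀ hy).symm
  rw [negInvOrbit, mul_eq_zero, sub_eq_zero, sub_eq_zero, sq_eq_sq_iff_eq_or_eq_neg, ← mul_pow,
    sq_eq_one_iff, hinv, hinv]
  simp only [one_mul, neg_mul, Finset.mem_insert, Finset.mem_singleton, or_assoc]

theorem card_negInvOrbit {y : K} (h2 : (2 : K) ≠ 0) (hy : y ≠ 0) (hy4 : y ^ 4 ≠ 1) :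
    (negInvOrbit y).card = 4 := by
  have hneg : ∀ z : K, z ≠ 0 → z ≠ -z := fun z hz h =>
    hz (by simpa [h2] using (by linear_combination h : 2 * z = 0))
  have hinv : ∀ c : K, c ^ 2 = 1 → y ≠ c * y⁻¹ := fun c hc h =>
    hy4 (by linear_combination (y ^ 2 + c) * (eq_mul_inv_iff_mul_eq₀ hy).mp h + hc)
  have hne_inv : y ≠ y⁻¹ := by simpa using hinv 1 (one_pow 2)
  have hne_neg_inv : y ≠ -y⁻¹ := by simpa using hinv (-1) (by norm_num)
  rw [negInvOrbit, Finset.card_insert_of_notMem, Finset.card_insert_of_notMem,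
    Finset.card_pair (hneg _ (inv_ne_zero hy))]
  · simp [neg_eq_iff_eq_neg, hne_inv, hne_neg_inv]
  · simp [hneg y hy, hne_inv, hne_neg_inv]

end NegInvOrbit

noncomputable def eliminant : ℂ[X] := X ^ 8 + 14 * X ^ 4 + 1

theorem eliminant_natDegree : eliminant.natDegree = 8 := by
  unfold eliminant; compute_degree!

theorem eliminant_separable : eliminant.Separable := by
  have h384 : C (384⁻¹ : ℂ) * 384 = 1 := by
    rw [← C_ofNat, ← C_mul]; norm_num
  refine ⟨C 384⁻¹ * (384 + 56 * X ^ 4), C 384⁻¹ * (-97 * X - 7 * X ^ 5), ?_⟩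
  simp only [eliminant, derivative_add, derivative_mul, derivative_X_pow, derivative_one,
    derivative_ofNat, Nat.cast_ofNat, map_ofNat]
  linear_combination h384

noncomputable def eliminantRoots : Finset ℂ := eliminant.roots.toFinset

theorem mem_eliminantRoots {y : ℂ} : y ∈ eliminantRoots ↔ y ^ 8 + 14 * y ^ 4 + 1 = 0 := by
  rw [eliminantRoots, Multiset.mem_toFinset, mem_roots eliminant_separable.ne_zero]
  simp [eliminant]

theorem card_eliminantRoots : eliminantRoots.card = 8 := by
  rw [eliminantRoots, Multiset.toFinset_card_of_nodup (nodup_roots eliminant_separable),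
    IsAlgClosed.card_roots_eq_natDegree, eliminant_natDegree]

theorem ne_zero_of_eliminant_root {y : ℂ} (hy : y ^ 8 + 14 * y ^ 4 + 1 = 0) : y ≠ 0 := by
  rintro rfl; norm_num at hy

theorem pow_four_ne_one_of_eliminant_root {y : ℂ} (hy : y ^ 8 + 14 * y ^ 4 + 1 = 0) :
    y ^ 4 ≠ 1 := fun h => by
  norm_num [show y ^ 8 = (y ^ 4) ^ 2 by ring, h] at hy

theorem leadingCoeff_ne_zero_of_eliminant_root {y : ℂ} (hy : y ^ 8 + 14 * y ^ 4 + 1 = 0) :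
    2 * y ^ 4 + y ^ 2 + 2 ≠ 0 := fun h => by
  -- a Bézout certificate for the coprimality of `y⁸ + 14y⁴ + 1` and `2y⁴ + y² + 2`
  have : (1 : ℂ) = 0 := by
    linear_combination ((2 * y ^ 2 - 3) / 49) * hy +
      ((26 - 14 * y ^ 2 + 2 * y ^ 4 - y ^ 6) / 49) * h
  norm_num at this

theorem mul_gMinus_sub_mul_gPlus (x y : ℂ) :
    (2 * y ^ 4 + y ^ 2 + 2) * gMinus x y - (2 * y ^ 4 - y ^ 2 + 2) * gPlus x y =
      4 * x ^ 2 * (y ^ 8 + 14 * y ^ 4 + 1) := by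
  unfold gPlus gMinus; ring

theorem sq_mul_gPlus (x y : ℂ) :
    y ^ 2 * gPlus x y = (2 * y ^ 4 + y ^ 2 + 2) * ((x ^ 2 - y ^ 2) * (x ^ 2 * y ^ 2 - 1)) +
      2 * x ^ 2 * (y ^ 8 + 14 * y ^ 4 + 1) := by
  unfold gPlus; ring

theorem ne_zero_of_gPlus_eq_zero_of_gMinus_eq_zero {x y : ℂ} (hp : gPlus x y = 0)
    (hm : gMinus x y = 0) : x ≠ 0 := by
  rintro rfl
  simp only [gPlus, gMinus] at hp hm
  have hy : y = 0 := by simpa using (by linear_combination (hp - hm) / 2 : y ^ 2 = 0)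
  subst hy
  norm_num at hp

theorem gPlus_eq_zero_and_gMinus_eq_zero_iff {x y : ℂ} :
    gPlus x y = 0 ∧ gMinus x y = 0 ↔
      y ^ 8 + 14 * y ^ 4 + 1 = 0 ∧ (x ^ 2 - y ^ 2) * (x ^ 2 * y ^ 2 - 1) = 0 := by
  constructor
  · rintro ⟨hp, hm⟩
    have hx := ne_zero_of_gPlus_eq_zero_of_gMinus_eq_zero hp hm
    have hy : y ^ 8 + 14 * y ^ 4 + 1 = 0 := by
      have := mul_gMinus_sub_mul_gPlus x y
      rw [hp, hm] at this
      simpa [hx] using this.symm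
    refine ⟨hy, ?_⟩
    have := sq_mul_gPlus x y
    rw [hp, hy] at this
    simpa [leadingCoeff_ne_zero_of_eliminant_root hy] using this.symm
  · rintro ⟨hy, hq⟩
    have hp : gPlus x y = 0 := by
      have := sq_mul_gPlus x y
      rw [hq, hy] at this
      simpa [ne_zero_of_eliminant_root hy] using this
    refine ⟨hp, ?_⟩
    have := mul_gMinus_sub_mul_gPlus x y
    rw [hp, hy] at this
    simpa [leadingCoeff_ne_zero_of_eliminant_root hy] using this

theorem setOf_gPlus_eq_zero_and_gMinus_eq_zero :
    {p : ℂ × ℂ | gPlus p.1 p.2 = 0 ∧ gMinus p.1 p.2 = 0} =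
      ↑(eliminantRoots.biUnion fun y => negInvOrbit y ×ˢ {y}) := by
  ext ⟨x, y⟩
  rw [Set.mem_ofPred_eq, gPlus_eq_zero_and_gMinus_eq_zero_iff, Finset.mem_coe,
    Finset.mem_biUnion_product_singleton, mem_eliminantRoots]
  exact and_congr_right fun hy =>
    sq_sub_sq_mul_sq_mul_sq_sub_one_eq_zero_iff (ne_zero_of_eliminant_root hy)

/-- The affine curves `C₊ = {g₊ = 0}` and `C₋ = {g₋ = 0}` intersect in exactly 32
points: the set `{(x,y) ∈ ℂ² : g₊(x,y) = 0 ∧ g₋(x,y) = 0}` is finite of cardinality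
`32`. -/
theorem curves_intersect_in_32_points :
    {p : ℂ × ℂ | gPlus p.1 p.2 = 0 ∧ gMinus p.1 p.2 = 0}.Finite ∧
    {p : ℂ × ℂ | gPlus p.1 p.2 = 0 ∧ gMinus p.1 p.2 = 0}.ncard = 32 := by
  have hfibre : ∀ y ∈ eliminantRoots, (negInvOrbit y).card = 4 := fun y hy =>
    have hy := mem_eliminantRoots.mp hy
    card_negInvOrbit two_ne_zero (ne_zero_of_eliminant_root hy)
      (pow_four_ne_one_of_eliminant_root hy)
  rw [setOf_gPlus_eq_zero_and_gMinus_eq_zero]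
  refine ⟨Finset.finite_toSet _, ?_⟩
  rw [Set.ncard_coe_finset, Finset.card_biUnion_product_singleton, Finset.sum_congr rfl hfibre,
    Finset.sum_const, card_eliminantRoots, smul_eq_mul]
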